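/- Let r₀ > 0 be such that ∫₀^β (r² + 2 sin² y)^{1/2}(3/4 − sin² y) dy ≥ 0 for all β ≥ 0 and 0 ≤ r ≤ r₀. Then for every 0 < r ≤ r₀ and every z ∈ ℝ, |G₁(r,z)| ≤ (9/4)·(1/2)·(G₂(r,z))²/r², where G₀(r,w) = ∫₀^w (1 + 2 sin²(ry)/r²)^{1/2} · (2 sin²(ry)/r²) dy, G₁(r,z) = (3/2) ∫₀^z G₀(r,w) (1 + 2 sin²(rw)/r²)^{1/2} dw, and G₂(r,w) = ∫₀^w (1 + 2 sin²(ry)/r²)^{1/2} dy. -/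

import Mathlib

open Real intervalIntegral

noncomputable def G₀ (r w : ℝ) : ℝ :=
  ∫ y in (0:ℝ)..w, Real.sqrt (1 + 2 * Real.sin (r * y) ^ 2 / r ^ 2) *
    (2 * Real.sin (r * y) ^ 2 / r ^ 2)

noncomputable def G₁ (r z : ℝ) : ℝ :=
  (3/2) * ∫ w in (0:ℝ)..z, G₀ r w * Real.sqrt (1 + 2 * Real.sin (r * w) ^ 2 / r ^ 2)

noncomputable def G₂ (r w : ℝ) : ℝ :=
  ∫ y in (0:ℝ)..w, Real.sqrt (1 + 2 * Real.sin (r * y) ^ 2 / r ^ 2)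

/-! Substituting `y ↦ r y` turns the hypothesis at `β = r w` into
`r² (3/4 G₂ r w - r²/2 G₀ r w) ≥ 0`, i.e. `G₀ r w ≤ 3/(2r²) G₂ r w` for `w ≥ 0`.
The weight in `G₁` is `∂_w G₂ r w ≥ 0`, so integrating this bound gives
`G₁ r z ≤ (3/2)(3/(2r²)) ∫₀^z G₂ ∂_w G₂ = (9/4)(1/2) G₂(r,z)²/r²`,
while `G₁ r z ≥ 0` since `G₀ ≥ 0` on `[0, ∞)`. Negative `z` reduce to positive ones
because `G₀ r`, `G₂ r` are odd and `G₁ r` is even. -/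

open MeasureTheory

namespace intervalIntegral

section

variable {E : Type*} [NormedAddCommGroup E] [NormedSpace ℝ E] {f : ℝ → E}

theorem integral_zero_neg_eq_neg_integral_comp_neg (z : ℝ) :
    ∫ x in 0..-z, f x = -∫ x in 0..z, f (-x) := by
  rw [integral_comp_neg, neg_zero, integral_symm]

theorem integral_zero_neg_of_even (hf : f.Even) (z : ℝ) :
    ∫ x in 0..-z, f x = -∫ x in 0..z, f x := by
  simp only [integral_zero_neg_eq_neg_integral_comp_neg, hf.eq]

theorem integral_zero_neg_of_odd (hf : f.Odd) (z : ℝ) :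
    ∫ x in 0..-z, f x = ∫ x in 0..z, f x := by
  simp only [integral_zero_neg_eq_neg_integral_comp_neg, hf _, integral_neg, neg_neg]

end

theorem integral_primitive_mul_self {f : ℝ → ℝ} (hf : Continuous f) (z : ℝ) :
    ∫ w in 0..z, (∫ y in 0..w, f y) * f w = (∫ y in 0..z, f y) ^ 2 / 2 := by
  have hF (w : ℝ) : HasDerivAt (fun w => ∫ y in 0..w, f y) (f w) w :=
    (hf.integral_hasStrictDerivAt 0 w).hasDerivAt
  have hderiv (w : ℝ) : HasDerivAt (fun w => (∫ y in 0..w, f y) ^ 2 / 2)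
      ((∫ y in 0..w, f y) * f w) w := by
    refine (((hF w).fun_pow 2).div_const 2).congr_deriv ?_
    ring
  have hF_cont := continuous_primitive (μ := volume)
    (fun _ _ => hf.intervalIntegrable _ _) 0
  rw [integral_eq_sub_of_hasDerivAt (fun w _ => hderiv w)
    ((hF_cont.mul hf).intervalIntegrable _ _)]
  simp

theorem integral_primitive_mul_le {f g : ℝ → ℝ} (hf : Continuous f) (hg : Continuous g)
    {c z : ℝ} (hz : 0 ≤ z) (hf_nonneg : ∀ w ∈ Set.Icc 0 z, 0 ≤ f w)
    (hgf : ∀ w ∈ Set.Icc 0 z, ∫ y in 0..w, g y ≤ c * ∫ y in 0..w, f y) :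
    ∫ w in 0..z, (∫ y in 0..w, g y) * f w ≤ c * ((∫ y in 0..z, f y) ^ 2 / 2) := by
  have hF_cont := continuous_primitive (μ := volume)
    (fun _ _ => hf.intervalIntegrable _ _) 0
  have hG_cont := continuous_primitive (μ := volume)
    (fun _ _ => hg.intervalIntegrable _ _) 0
  rw [← integral_primitive_mul_self hf, ← integral_const_mul]
  refine integral_mono_on hz ((hG_cont.mul hf).intervalIntegrable _ _)
    ((continuous_const.mul (hF_cont.mul hf)).intervalIntegrable _ _) fun w hw => ?_
  calc (∫ y in 0..w, g y) * f w ≤ (c * ∫ y in 0..w, f y) * f w :=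
        mul_le_mul_of_nonneg_right (hgf w hw) (hf_nonneg w hw)
    _ = c * ((∫ y in 0..w, f y) * f w) := mul_assoc _ _ _

end intervalIntegral

noncomputable def skyrmeWeight (r y : ℝ) : ℝ :=
  √(1 + 2 * sin (r * y) ^ 2 / r ^ 2)

lemma continuous_skyrmeWeight (r : ℝ) : Continuous (skyrmeWeight r) := by
  unfold skyrmeWeight
  fun_prop

lemma skyrmeWeight_even (r : ℝ) : (skyrmeWeight r).Even := fun y => by
  simp only [skyrmeWeight, mul_neg, sin_neg, neg_sq]

lemma G₂_eq_integral (r w : ℝ) : G₂ r w = ∫ y in 0..w, skyrmeWeight r y := rfl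

lemma G₀_eq_integral (r w : ℝ) :
    G₀ r w = ∫ y in 0..w, skyrmeWeight r y * (2 * sin (r * y) ^ 2 / r ^ 2) := rfl

lemma G₁_eq_integral (r z : ℝ) :
    G₁ r z = 3 / 2 * ∫ w in 0..z, G₀ r w * skyrmeWeight r w := rfl

lemma G₂_odd (r : ℝ) : (G₂ r).Odd :=
  intervalIntegral.integral_zero_neg_of_even (skyrmeWeight_even r)

lemma G₀_odd (r : ℝ) : (G₀ r).Odd :=
  intervalIntegral.integral_zero_neg_of_even fun y => by
    simp only [mul_neg, sin_neg, neg_sq]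

lemma G₁_even (r : ℝ) : (G₁ r).Even := fun z => by
  rw [G₁_eq_integral, G₁_eq_integral, intervalIntegral.integral_zero_neg_of_odd fun w => by
    rw [G₀_odd, skyrmeWeight_even, neg_mul]]

lemma G₀_nonneg (r : ℝ) {w : ℝ} (hw : 0 ≤ w) : 0 ≤ G₀ r w :=
  intervalIntegral.integral_nonneg hw fun y _ => by positivity

lemma G₁_nonneg (r : ℝ) {z : ℝ} (hz : 0 ≤ z) : 0 ≤ G₁ r z := by
  rw [G₁_eq_integral]
  refine mul_nonneg (by norm_num) (intervalIntegral.integral_nonneg hz fun w hw => ?_)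
  exact mul_nonneg (G₀_nonneg r hw.1) (sqrt_nonneg _)

lemma G₁_le_of_G₀_le (r : ℝ) {c z : ℝ} (hz : 0 ≤ z)
    (hG₀ : ∀ w ∈ Set.Icc 0 z, G₀ r w ≤ c * G₂ r w) :
    G₁ r z ≤ 3 / 2 * (c * (G₂ r z ^ 2 / 2)) := by
  rw [G₁_eq_integral]
  gcongr
  exact intervalIntegral.integral_primitive_mul_le (continuous_skyrmeWeight r)
    (by fun_prop) hz (fun w _ => sqrt_nonneg _) hG₀

lemma integral_sqrt_mul_three_quarters_sub_sin_sq {r : ℝ} (hr : 0 < r) (w : ℝ) :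
    ∫ y in 0..r * w, √(r ^ 2 + 2 * sin y ^ 2) * (3 / 4 - sin y ^ 2)
      = r ^ 2 * (3 / 4 * G₂ r w - r ^ 2 / 2 * G₀ r w) := by
  have hpt (y : ℝ) : √(r ^ 2 + 2 * sin (r * y) ^ 2) * (3 / 4 - sin (r * y) ^ 2)
      = r * (3 / 4 * skyrmeWeight r y
        - r ^ 2 / 2 * (skyrmeWeight r y * (2 * sin (r * y) ^ 2 / r ^ 2))) := by
    have hsqrt : √(r ^ 2 + 2 * sin (r * y) ^ 2) = r * skyrmeWeight r y := by
      have hfactor : r ^ 2 + 2 * sin (r * y) ^ 2 = r ^ 2 * (1 + 2 * sin (r * y) ^ 2 / r ^ 2) := by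
        field_simp
      rw [hfactor, sqrt_mul (sq_nonneg r), sqrt_sq hr.le, skyrmeWeight]
    rw [hsqrt]
    field_simp
  have hint := (continuous_skyrmeWeight r).intervalIntegrable (μ := volume) 0 w
  rw [← mul_zero r, ← intervalIntegral.smul_integral_comp_mul_left]
  simp only [hpt, intervalIntegral.integral_const_mul]
  rw [intervalIntegral.integral_sub (hint.const_mul _)
      ((hint.mul_continuousOn (by fun_prop)).const_mul _),
    intervalIntegral.integral_const_mul, intervalIntegral.integral_const_mul, smul_eq_mul,
    ← G₂_eq_integral, ← G₀_eq_integral]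
  ring

theorem skyrme_stmt4 (r₀ : ℝ)
    (h : ∀ r : ℝ, 0 ≤ r → r ≤ r₀ → ∀ β : ℝ, 0 ≤ β →
      0 ≤ ∫ y in (0:ℝ)..β, Real.sqrt (r ^ 2 + 2 * Real.sin y ^ 2) * (3/4 - Real.sin y ^ 2)) :
    ∀ r : ℝ, 0 < r → r ≤ r₀ → ∀ z : ℝ,
      |G₁ r z| ≤ (9/4) * (1/2) * (G₂ r z) ^ 2 / r ^ 2 := by
  intro r hr hrr z
  wlog hz : 0 ≤ z
  · rw [← G₁_even, ← neg_sq, ← G₂_odd]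
    exact this r₀ h r hr hrr (-z) (by linarith)
  have hG₀ (w : ℝ) (hw : w ∈ Set.Icc 0 z) : G₀ r w ≤ 3 / (2 * r ^ 2) * G₂ r w := by
    have hint := h r hr.le hrr (r * w) (mul_nonneg hr.le hw.1)
    rw [integral_sqrt_mul_three_quarters_sub_sin_sq hr,
      mul_nonneg_iff_of_pos_left (by positivity)] at hint
    rw [div_mul_eq_mul_div, le_div_iff₀ (by positivity)]
    linarith
  calc |G₁ r z| = G₁ r z := abs_of_nonneg (G₁_nonneg r hz)
    _ ≤ 3 / 2 * (3 / (2 * r ^ 2) * (G₂ r z ^ 2 / 2)) := G₁_le_of_G₀_le r hz hG₀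
    _ = (9/4) * (1/2) * (G₂ r z) ^ 2 / r ^ 2 := by field_simp; ring
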